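/- arXiv:2207.10209 — 5 statements merged into one kernel-verified Lean document; each statement's English description precedes it below -/
import Mathlib

section
/- Let d ≥ 1, C ≥ 0, M ≥ 0, and let u : ℝ^d → ℝ be semiconcave with constant C and satisfy |u(x)| ≤ M for all x ∈ ℝ^d. Then u is Lipschitz continuous with constant 2√(C·M): for all x, y ∈ ℝ^d, |u(x) − u(y)| ≤ 2√(C·M) · |x − y|. -/
lemma three_point {E : Type*} [NormedAddCommGroup E] [InnerProductSpace ℝ E]
    (C : ℝ) (u : E → ℝ) (hsc : ConcaveOn ℝ Set.univ (fun x => u x - C / 2 * ‖x‖ ^ 2))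
    (p e : E) (s t : ℝ) (hs : 0 < s) (ht : 0 < t) :
    s * (u (p + t • e) - u p) ≤
      t * (u p - u (p - s • e)) + C / 2 * (s * t * (s + t)) * ‖e‖ ^ 2 := by
  have hst : 0 < s + t := by linarith
  have hst' : s + t ≠ 0 := ne_of_gt hst
  have hcomb : (t / (s + t)) • (p - s • e) + (s / (s + t)) • (p + t • e) = p := by
    have h1 : (t / (s + t)) • (p - s • e) + (s / (s + t)) • (p + t • e)
        = (t / (s + t) + s / (s + t)) • p + (t / (s + t) * (-s) + s / (s + t) * t) • e := by
      module
    rw [h1]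
    have h2 : t / (s + t) + s / (s + t) = 1 := by field_simp; ring
    have h3 : t / (s + t) * (-s) + s / (s + t) * t = 0 := by field_simp; ring
    rw [h2, h3]
    simp
  have h := hsc.2 (Set.mem_univ (p - s • e)) (Set.mem_univ (p + t • e))
    (by positivity : (0:ℝ) ≤ t / (s + t)) (by positivity : (0:ℝ) ≤ s / (s + t))
    (by field_simp; ring)
  rw [hcomb] at h
  simp only [smul_eq_mul] at h
  have hn1 : ‖p - s • e‖ ^ 2 = ‖p‖ ^ 2 - 2 * (s * inner ℝ p e) + s ^ 2 * ‖e‖ ^ 2 := by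
    rw [sub_eq_add_neg, norm_add_sq_real]
    rw [← smul_neg]
    rw [real_inner_smul_right, norm_smul]
    simp [inner_neg_right, mul_pow, sq_abs]
    ring
  have hn2 : ‖p + t • e‖ ^ 2 = ‖p‖ ^ 2 + 2 * (t * inner ℝ p e) + t ^ 2 * ‖e‖ ^ 2 := by
    rw [norm_add_sq_real, real_inner_smul_right, norm_smul]
    simp [mul_pow, sq_abs]
  rw [hn1, hn2] at h
  set A := u (p - s • e) with hA
  set B := u (p + t • e) with hB
  set U := u p with hU
  set P := ‖p‖ ^ 2 with hP
  set N := ‖e‖ ^ 2 with hN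
  set I := inner ℝ p e with hI
  have h2 : t * (A - C / 2 * (P - 2 * (s * I) + s ^ 2 * N))
      + s * (B - C / 2 * (P + 2 * (t * I) + t ^ 2 * N)) ≤ (s + t) * (U - C / 2 * P) := by
    rw [← sub_nonneg] at h ⊢
    have : (s + t) * (U - C / 2 * P) - (t * (A - C / 2 * (P - 2 * (s * I) + s ^ 2 * N))
        + s * (B - C / 2 * (P + 2 * (t * I) + t ^ 2 * N)))
        = (s + t) * ((U - C / 2 * P) - (t / (s + t) * (A - C / 2 * (P - 2 * (s * I) + s ^ 2 * N))
        + s / (s + t) * (B - C / 2 * (P + 2 * (t * I) + t ^ 2 * N)))) := by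
      field_simp
    rw [this]
    exact mul_nonneg (le_of_lt hst) h
  nlinarith [h2]

lemma master_ineq {E : Type*} [NormedAddCommGroup E] [InnerProductSpace ℝ E]
    (C M : ℝ) (u : E → ℝ)
    (hsc : ConcaveOn ℝ Set.univ (fun x => u x - C / 2 * ‖x‖ ^ 2))
    (hbdd : ∀ x, |u x| ≤ M) (x y : E) (s : ℝ) (hs : 0 < s) (n : ℕ) (hn : 1 ≤ n) :
    u x - u y ≤ 2 * M / s + C / 2 * ((s + 1 / n) * ‖x - y‖ ^ 2) := by
  set e := x - y with he
  have hn0 : (0:ℝ) < n := by exact_mod_cast hn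
  set t : ℝ := 1 / n with htdef
  have ht : 0 < t := by positivity
  have step : ∀ p : E, u (p + t • e) - u p ≤ 2 * M * t / s + C / 2 * (t * (s + t)) * ‖e‖ ^ 2 := by
    intro p
    have h3 := three_point C u hsc p e s t hs ht
    have hb : u p - u (p - s • e) ≤ 2 * M := by
      have h1 := abs_le.1 (hbdd p)
      have h2 := abs_le.1 (hbdd (p - s • e))
      linarith
    have h4 : s * (u (p + t • e) - u p) ≤ t * (2 * M) + C / 2 * (s * t * (s + t)) * ‖e‖ ^ 2 := by
      nlinarith [h3, hb, ht.le]
    rw [← sub_nonneg] at h4 ⊢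
    have heq : 2 * M * t / s + C / 2 * (t * (s + t)) * ‖e‖ ^ 2 - (u (p + t • e) - u p)
        = (1 / s) * (t * (2 * M) + C / 2 * (s * t * (s + t)) * ‖e‖ ^ 2
          - s * (u (p + t • e) - u p)) := by
      field_simp
    rw [heq]
    positivity
  have claim : ∀ k : ℕ,
      u (y + ((k : ℝ) * t) • e) - u y ≤ k * (2 * M * t / s + C / 2 * (t * (s + t)) * ‖e‖ ^ 2) := by
    intro k
    induction k with
    | zero => simp
    | succ k ih =>
      have hpt : y + (((k:ℕ)+1 : ℝ) * t) • e = (y + ((k : ℝ) * t) • e) + t • e := by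
        rw [add_assoc, ← add_smul]; ring_nf
      push_cast
      push_cast at ih
      rw [hpt]
      have := step (y + ((k : ℝ) * t) • e)
      have goal' : u (y + ((k:ℝ) * t) • e + t • e) - u y
          ≤ ((k:ℝ) + 1) * (2 * M * t / s + C / 2 * (t * (s + t)) * ‖e‖ ^ 2) := by
        nlinarith [this, ih]
      exact goal'
  have hkey := claim n
  have hnt : (n : ℝ) * t = 1 := by
    rw [htdef]; field_simp
  rw [hnt, one_smul, he] at hkey
  rw [add_sub_cancel] at hkey
  calc u x - u y ≤ n * (2 * M * t / s + C / 2 * (t * (s + t)) * ‖e‖ ^ 2) := hkey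
    _ = 2 * M / s + C / 2 * ((s + 1 / n) * ‖x - y‖ ^ 2) := by
        rw [← he, htdef]
        field_simp

/-- A bounded semiconcave function on `ℝ^d` is Lipschitz with constant `2√(C·M)`. -/
theorem semiconcave_bounded_lipschitz (d : ℕ) (hd : 1 ≤ d) (C M : ℝ) (hC : 0 ≤ C) (hM : 0 ≤ M)
    (u : EuclideanSpace ℝ (Fin d) → ℝ)
    (hsc : ConcaveOn ℝ Set.univ (fun x => u x - C / 2 * ‖x‖ ^ 2))
    (hbdd : ∀ x, |u x| ≤ M) :
    ∀ x y : EuclideanSpace ℝ (Fin d), |u x - u y| ≤ 2 * Real.sqrt (C * M) * ‖x - y‖ := by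
  have key2 : ∀ a b : EuclideanSpace ℝ (Fin d), 0 < ‖a - b‖ →
      u a - u b ≤ 2 * Real.sqrt (C * M) * ‖a - b‖ := by
    intro a b hab
    set r := ‖a - b‖ with hr
    apply le_of_forall_pos_le_add
    intro ε hε
    by_cases hM0 : M = 0
    · have ha : u a = 0 := by
        have := hbdd a; rw [hM0] at this
        exact abs_eq_zero.1 (le_antisymm this (abs_nonneg _))
      have hb : u b = 0 := by
        have := hbdd b; rw [hM0] at this
        exact abs_eq_zero.1 (le_antisymm this (abs_nonneg _))
      rw [ha, hb, sub_zero]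
      positivity
    · have hM' : 0 < M := lt_of_le_of_ne hM (Ne.symm hM0)
      by_cases hC0 : C = 0
      · have hs : (0:ℝ) < (2 * M + 1) / ε := by positivity
        have h := master_ineq C M u hsc hbdd a b ((2 * M + 1) / ε) hs 1 le_rfl
        rw [hC0] at h
        have h2 : 2 * M / ((2 * M + 1) / ε) ≤ ε := by
          rw [div_le_iff₀ hs]
          have : ε * ((2 * M + 1) / ε) = 2 * M + 1 := by field_simp
          rw [this]; linarith
        have h3 : (0:ℝ) ≤ 2 * Real.sqrt (C * M) * r := by positivity
        simp only [zero_div, zero_mul, zero_add] at h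
        linarith [h, h2, h3]
      · have hC' : 0 < C := lt_of_le_of_ne hC (Ne.symm hC0)
        have hsC : 0 < Real.sqrt C := Real.sqrt_pos.2 hC'
        have hsM : 0 < Real.sqrt M := Real.sqrt_pos.2 hM'
        have h1 : Real.sqrt C * Real.sqrt C = C := Real.mul_self_sqrt hC
        have h2 : Real.sqrt M * Real.sqrt M = M := Real.mul_self_sqrt hM
        have hCM : Real.sqrt (C * M) = Real.sqrt C * Real.sqrt M := Real.sqrt_mul hC M
        obtain ⟨n, hn⟩ := exists_nat_gt (C * r ^ 2 / (2 * ε))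
        set n' := max n 1 with hn'def
        have hn1 : 1 ≤ n' := le_max_right n 1
        have hn'0 : (0:ℝ) < n' := by exact_mod_cast hn1
        have hnn : C * r ^ 2 / (2 * ε) < n' := lt_of_lt_of_le hn (by exact_mod_cast le_max_left n 1)
        have hnε : C / 2 * (1 / n' * r ^ 2) ≤ ε := by
          rw [div_lt_iff₀ (by positivity : (0:ℝ) < 2 * ε)] at hnn
          rw [← sub_nonneg]
          have heq2 : ε - C / 2 * (1 / n' * r ^ 2) = (n' * (2 * ε) - C * r ^ 2) / (2 * n') := by
            field_simp
          rw [heq2]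
          apply div_nonneg _ (by positivity)
          nlinarith [hnn]
        set s := 2 * Real.sqrt M / (Real.sqrt C * r) with hsdef
        have hs : 0 < s := by positivity
        have h := master_ineq C M u hsc hbdd a b s hs n' hn1
        have heq : 2 * M / s + C / 2 * (s * r ^ 2) = 2 * Real.sqrt C * Real.sqrt M * r := by
          rw [hsdef]
          field_simp
          linear_combination (-M) * h1
            + (C - 2 * (Real.sqrt C * Real.sqrt C)) * h2
        rw [hCM]
        have hsplit : C / 2 * ((s + 1 / n') * r ^ 2)
            = C / 2 * (s * r ^ 2) + C / 2 * (1 / n' * r ^ 2) := by ring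
        rw [hsplit] at h
        linarith [h, heq, hnε]
  intro x y
  rcases eq_or_ne x y with rfl | hxy
  · simp
  · have hr : 0 < ‖x - y‖ := by rw [norm_pos_iff, sub_ne_zero]; exact hxy
    have hr' : 0 < ‖y - x‖ := by rwa [norm_sub_rev]
    rw [abs_sub_le_iff]
    constructor
    · exact key2 x y hr
    · have := key2 y x hr'
      rwa [norm_sub_rev] at this
end

section
/- Let d ≥ 1. There exists a constant c_d > 0, depending only on d, with the following property: whenever u : ℝ^d → ℝ is Lipschitz with constant L ≥ 0 and semiconcave with constant C ≥ 0, then for every R ≥ 1, every unit vector e ∈ ℝ^d, and every smooth compactly supported function φ : ℝ^d → ℝ with support contained in the open ball B_R of radius R centered at 0 and with |φ(x)| ≤ 1 for all x, one has | ∫_{ℝ^d} u(x) · D²φ(x)[e,e] dx | ≤ c_d (L + C) R^d, where D²φ(x)[e,e] is the second directional derivative of φ at x in direction e. -/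
open MeasureTheory Metric

noncomputable def hess {d : ℕ} (f : EuclideanSpace ℝ (Fin d) → ℝ)
    (x v w : EuclideanSpace ℝ (Fin d)) : ℝ :=
  fderiv ℝ (fderiv ℝ f) x v w

section Helpers
variable {d : ℕ}
local notation "E" => EuclideanSpace ℝ (Fin d)

lemma aux_int (u g : E → ℝ) (hu : Continuous u) (hg : Continuous g)
    (hgc : HasCompactSupport g) (a b : E) :
    Integrable (fun x => u (x + a) * g (x + b)) := by
  have hgb : HasCompactSupport (fun x => g (x + b)) :=
    hgc.comp_homeomorph (Homeomorph.addRight b)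
  have hcont : Continuous (fun x => u (x + a) * g (x + b)) :=
    (hu.comp (continuous_id.add continuous_const)).mul
      (hg.comp (continuous_id.add continuous_const))
  exact hcont.integrable_of_hasCompactSupport (hgb.mul_left)

lemma aux_trans (u g : E → ℝ) (a : E) :
    ∫ x, u x * g (x + a) = ∫ x, u (x - a) * g x := by
  have := integral_add_right_eq_self (μ := (volume : Measure E))
    (fun y => u (y - a) * g y) a
  simp only [add_sub_cancel_right] at this
  exact this

lemma aux_semiconcave (u : E → ℝ) (C : ℝ)
    (hConc : ConcaveOn ℝ Set.univ (fun x => u x - C / 2 * ‖x‖ ^ 2))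
    (x a : E) : u (x + a) + u (x - a) - 2 * u x ≤ C * ‖a‖ ^ 2 := by
  have hmid : ((1:ℝ)/2) • (x + a) + ((1:ℝ)/2) • (x - a) = x := by
    rw [smul_add, smul_sub]; module
  have h := hConc.2 (Set.mem_univ (x + a)) (Set.mem_univ (x - a))
    (by norm_num : (0:ℝ) ≤ 1/2) (by norm_num : (0:ℝ) ≤ 1/2) (by norm_num)
  rw [hmid] at h
  have hpar : ‖x + a‖ ^ 2 + ‖x - a‖ ^ 2 = 2 * ‖x‖ ^ 2 + 2 * ‖a‖ ^ 2 := by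
    have h1 : ‖x + a‖ ^ 2 = ‖x‖ ^ 2 + 2 * inner ℝ x a + ‖a‖ ^ 2 := norm_add_sq_real x a
    have h2 : ‖x - a‖ ^ 2 = ‖x‖ ^ 2 - 2 * inner ℝ x a + ‖a‖ ^ 2 := norm_sub_sq_real x a
    linarith
  simp only [smul_eq_mul] at h
  have e1 : C/2*‖x+a‖^2 + C/2*‖x-a‖^2 = C*‖x‖^2 + C*‖a‖^2 := by
    linear_combination (C/2) * hpar
  linarith [h, e1]

lemma aux_line (x e : E) (t : ℝ) : HasDerivAt (fun t : ℝ => x + t • e) e t := by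
  simpa using ((hasDerivAt_id t).smul_const e).const_add x

lemma aux_G (φ : E → ℝ) (hφ : ContDiff ℝ (⊤ : ℕ∞) φ) (x e : E) (t : ℝ) :
    HasDerivAt (fun t : ℝ => fderiv ℝ φ (x + t • e) e) (hess φ (x + t • e) e e) t := by
  have hF : Differentiable ℝ (fderiv ℝ φ) :=
    (hφ.fderiv_right (m := (⊤ : ℕ∞)) le_rfl).differentiable (by simp)
  have h1 : HasDerivAt (fun t : ℝ => fderiv ℝ φ (x + t • e))
      (fderiv ℝ (fderiv ℝ φ) (x + t • e) e) t :=
    (hF (x + t • e)).hasFDerivAt.comp_hasDerivAt t (aux_line x e t)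
  have h2 := h1.clm_apply (hasDerivAt_const t e)
  simpa [hess] using h2

lemma aux_g (φ : E → ℝ) (hφ : ContDiff ℝ (⊤ : ℕ∞) φ) (x e : E) (t : ℝ) :
    HasDerivAt (fun t : ℝ => φ (x + t • e)) (fderiv ℝ φ (x + t • e) e) t :=
  ((hφ.differentiable (by simp)) (x + t • e)).hasFDerivAt.comp_hasDerivAt t (aux_line x e t)

lemma aux_taylor (φ : E → ℝ) (hφ : ContDiff ℝ (⊤ : ℕ∞) φ) (x e : E) (h ε : ℝ) (hh : 0 < h)
    (hε : 0 ≤ ε)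
    (hmod : ∀ t : ℝ, |t| ≤ h → |hess φ (x + t • e) e e - hess φ x e e| ≤ ε) :
    |φ (x + h • e) + φ (x - h • e) - 2 * φ x - h ^ 2 * hess φ x e e| ≤ 2 * ε * h ^ 2 := by
  set Hx := hess φ x e e with hHx
  set G : ℝ → ℝ := fun t => fderiv ℝ φ (x + t • e) e with hG
  set W : ℝ → ℝ := fun t => G t - G 0 - t * Hx with hW
  set w : ℝ → ℝ := fun t => φ (x + t • e) - φ x - t * G 0 - t ^ 2 / 2 * Hx with hw
  have hWd : ∀ t : ℝ, HasDerivAt W (hess φ (x + t • e) e e - Hx) t := by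
    intro t
    have := ((aux_G φ hφ x e t).sub_const (G 0)).sub
      ((hasDerivAt_id t).mul_const Hx)
    exact this.congr_deriv (by ring)
  have hwd : ∀ t : ℝ, HasDerivAt w (W t) t := by
    intro t
    have h1 := ((aux_g φ hφ x e t).sub_const (φ x)).sub ((hasDerivAt_id t).mul_const (G 0))
    have h2 : HasDerivAt (fun t : ℝ => t ^ 2 / 2 * Hx) (t * Hx) t := by
      have := (hasDerivAt_pow 2 t).div_const 2 |>.mul_const Hx
      exact this.congr_deriv (by norm_num)
    have := h1.sub h2
    exact this.congr_deriv (by simp [hW, hG])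
  set s : Set ℝ := Set.Icc (-h) h with hs
  have hmem : ∀ t : ℝ, t ∈ s → |t| ≤ h := fun t ht => abs_le.2 ⟨ht.1, ht.2⟩
  have h0s : (0 : ℝ) ∈ s := ⟨by linarith, by linarith⟩
  have hWb : ∀ t ∈ s, |W t| ≤ ε * h := by
    intro t ht
    have := Convex.norm_image_sub_le_of_norm_hasDerivWithin_le
      (f := W) (f' := fun t => hess φ (x + t • e) e e - Hx)
      (fun y hy => (hWd y).hasDerivWithinAt)
      (fun y hy => by simpa [Real.norm_eq_abs] using hmod y (hmem y hy))
      (convex_Icc _ _) h0s ht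
    have hW0 : W 0 = 0 := by simp [hW]
    rw [hW0, sub_zero, sub_zero] at this
    calc |W t| ≤ ε * ‖t‖ := this
      _ ≤ ε * h := by
          have := hmem t ht
          rw [Real.norm_eq_abs]
          exact mul_le_mul_of_nonneg_left this hε
  have hwb : ∀ t ∈ s, |w t| ≤ ε * h * h := by
    intro t ht
    have := Convex.norm_image_sub_le_of_norm_hasDerivWithin_le
      (f := w) (f' := W)
      (fun y hy => (hwd y).hasDerivWithinAt)
      (fun y hy => by simpa [Real.norm_eq_abs] using hWb y hy)
      (convex_Icc _ _) h0s ht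
    have hw0 : w 0 = 0 := by simp [hw]
    rw [hw0, sub_zero, sub_zero] at this
    calc |w t| ≤ ε * h * ‖t‖ := this
      _ ≤ ε * h * h := by
          rw [Real.norm_eq_abs]
          exact mul_le_mul_of_nonneg_left (hmem t ht) (by positivity)
  have hhs : h ∈ s := ⟨by linarith, le_rfl⟩
  have hnhs : -h ∈ s := ⟨le_rfl, by linarith⟩
  have key : φ (x + h • e) + φ (x - h • e) - 2 * φ x - h ^ 2 * Hx = w h + w (-h) := by
    simp only [hw]
    have : x + (-h) • e = x - h • e := by rw [neg_smul, ← sub_eq_add_neg]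
    rw [this]; ring
  rw [key]
  calc |w h + w (-h)| ≤ |w h| + |w (-h)| := abs_add_le _ _
    _ ≤ ε * h * h + ε * h * h := add_le_add (hwb h hhs) (hwb (-h) hnhs)
    _ = 2 * ε * h ^ 2 := by ring

end Helpers

set_option maxHeartbeats 1000000 in
/-- The distributional Hessian of a Lipschitz semiconcave function, tested directionally
against smooth bump functions supported in `B_R`, is bounded by `c_d (L + C) R^d`. -/
theorem hessian_locally_finite_measure (d : ℕ) (hd : 1 ≤ d) :
    ∃ cd : ℝ, 0 < cd ∧
      ∀ (u : EuclideanSpace ℝ (Fin d) → ℝ) (L C : ℝ), 0 ≤ L → 0 ≤ C →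
      (∀ x y, |u x - u y| ≤ L * ‖x - y‖) →
      ConcaveOn ℝ Set.univ (fun x => u x - C / 2 * ‖x‖ ^ 2) →
      ∀ R : ℝ, 1 ≤ R → ∀ e : EuclideanSpace ℝ (Fin d), ‖e‖ = 1 →
      ∀ φ : EuclideanSpace ℝ (Fin d) → ℝ, ContDiff ℝ (⊤ : ℕ∞) φ → HasCompactSupport φ →
      tsupport φ ⊆ Metric.ball (0 : EuclideanSpace ℝ (Fin d)) R → (∀ x, |φ x| ≤ 1) →
      |∫ x, u x * hess φ x e e| ≤ cd * (L + C) * R ^ d := by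
  haveI : NeZero d := ⟨Nat.one_le_iff_ne_zero.mp hd⟩
  set E := EuclideanSpace ℝ (Fin d)
  -- bump function on the unit scale
  let f : ContDiffBump (0 : E) := ⟨1, 2, one_pos, one_lt_two⟩
  obtain ⟨K, hK⟩ := ContDiff.lipschitzWith_of_hasCompactSupport
    f.hasCompactSupport (f.contDiff (n := 1)) (by simp)
  set V : ℝ := (volume (ball (0 : E) 1)).toReal with hV
  have hV0 : 0 ≤ V := ENNReal.toReal_nonneg
  have hK0 : (0:ℝ) ≤ K := K.coe_nonneg
  refine ⟨(2 + K) * 3 ^ d * V + 1, by positivity, ?_⟩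
  intro u L C hL hC hLip hConc R hR e he φ hφ hφc hφsupp hφ1
  have hR0 : (0:ℝ) < R := lt_of_lt_of_le one_pos hR
  -- continuity of u
  have hu : Continuous u := by
    have : LipschitzWith (Real.toNNReal L) u := by
      apply LipschitzWith.of_dist_le_mul
      intro x y
      rw [Real.dist_eq, dist_eq_norm]
      refine le_trans (hLip x y) ?_
      exact mul_le_mul_of_nonneg_right (le_of_eq (Real.coe_toNNReal L hL).symm)
        (norm_nonneg _)
    exact this.continuous
  -- volume of balls
  have volconv : ∀ r : ℝ, 0 ≤ r → (volume (ball (0 : E) r)).toReal = r ^ d * V := by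
    intro r hr
    rw [Measure.addHaar_ball (volume : Measure E) 0 hr, ENNReal.toReal_mul,
      ENNReal.toReal_ofReal (by positivity), finrank_euclideanSpace_fin]
  -- the cutoff ψ
  set ψ : E → ℝ := fun x => f (R⁻¹ • x) with hψdef
  have hψcont : Continuous ψ := f.continuous.comp (continuous_const_smul _)
  have hψ_eq_zero : ∀ x : E, 2 * R ≤ ‖x‖ → ψ x = 0 := by
    intro x hx
    apply f.zero_of_le_dist
    simp only [dist_zero_right, f]
    rw [norm_smul, norm_inv, Real.norm_eq_abs, abs_of_pos hR0,
      le_inv_mul_iff₀ hR0]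
    linarith
  have hψ_cpt : HasCompactSupport ψ := by
    apply HasCompactSupport.intro (isCompact_closedBall (0:E) (2*R))
    intro x hx
    apply hψ_eq_zero
    simp only [mem_closedBall, dist_zero_right, not_le] at hx
    linarith
  have hψ_nonneg : ∀ x, 0 ≤ ψ x := fun x => f.nonneg
  have hψ_le_one : ∀ x, ψ x ≤ 1 := fun x => f.le_one
  have hψ_one : ∀ x : E, ‖x‖ ≤ R → ψ x = 1 := by
    intro x hx
    apply f.one_of_mem_closedBall
    simp only [mem_closedBall, dist_zero_right]
    rw [norm_smul, norm_inv, Real.norm_eq_abs, abs_of_pos hR0]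
    rw [inv_mul_le_iff₀ hR0]
    simpa [f] using hx
  have hφψ : ∀ x, |φ x| ≤ ψ x := by
    intro x
    by_cases hx : x ∈ tsupport φ
    · have : ‖x‖ ≤ R := le_of_lt (by simpa using hφsupp hx)
      rw [hψ_one x this]; exact hφ1 x
    · rw [image_eq_zero_of_notMem_tsupport hx]; simp [hψ_nonneg x]
  have hψLip : ∀ p q : E, |ψ p - ψ q| ≤ (K:ℝ) * ‖p - q‖ := by
    intro p q
    have h1 := hK.dist_le_mul (R⁻¹ • p) (R⁻¹ • q)
    rw [Real.dist_eq, dist_eq_norm, ← smul_sub, norm_smul, norm_inv, Real.norm_eq_abs,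
      abs_of_pos hR0] at h1
    refine le_trans h1 ?_
    have h2 : R⁻¹ * ‖p - q‖ ≤ ‖p - q‖ :=
      mul_le_of_le_one_left (norm_nonneg _) (inv_le_one_of_one_le₀ hR)
    exact mul_le_mul_of_nonneg_left h2 hK0
  -- derivative facts about φ
  have hφ_zero : ∀ x : E, R ≤ ‖x‖ → φ x = 0 := by
    intro x hx
    apply image_eq_zero_of_notMem_tsupport
    intro hmem
    have := hφsupp hmem
    rw [mem_ball, dist_zero_right] at this
    linarith
  have hφint : Integrable φ := hφ.continuous.integrable_of_hasCompactSupport hφc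
  have hψint : Integrable ψ := hψcont.integrable_of_hasCompactSupport hψ_cpt
  -- bounds on test-function integrals
  have bound_intφ : |∫ x, φ x| ≤ (volume (ball (0:E) R)).toReal := by
    rw [← setIntegral_eq_integral_of_forall_compl_eq_zero
      (s := ball (0:E) R) (f := φ)
      (fun x hx => hφ_zero x (by simpa [mem_ball, dist_zero_right, not_lt] using hx))]
    have := norm_setIntegral_le_of_norm_le_const (μ := volume) (s := ball (0:E) R) (f := φ)
      (C := 1) measure_ball_lt_top
      (fun x _ => by simpa [Real.norm_eq_abs] using hφ1 x)
    simpa [Real.norm_eq_abs, Measure.real] using this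
  have bound_intψ : ∫ x, ψ x ≤ (volume (ball (0:E) (2*R))).toReal := by
    rw [← setIntegral_eq_integral_of_forall_compl_eq_zero
      (s := ball (0:E) (2*R)) (f := ψ)
      (fun x hx => hψ_eq_zero x (by simpa [mem_ball, dist_zero_right, not_lt] using hx))]
    have h1 := norm_setIntegral_le_of_norm_le_const (μ := volume) (s := ball (0:E) (2*R))
      (C := 1) measure_ball_lt_top
      (fun x _ => by rw [Real.norm_eq_abs, abs_of_nonneg (hψ_nonneg x)]; exact hψ_le_one x)
    rw [Real.norm_eq_abs] at h1
    calc ∫ x in ball (0:E) (2*R), ψ x ≤ |∫ x in ball (0:E) (2*R), ψ x| := le_abs_self _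
      _ ≤ 1 * (volume (ball (0:E) (2*R))).toReal := h1
      _ = _ := one_mul _
  set M : ℝ := C * (R^d*V) + C * ((2*R)^d*V) + L * (K:ℝ) * ((3*R)^d*V) with hM
  -- the key finite-difference estimate
  have key : ∀ h : ℝ, 0 < h → h ≤ 1 →
      |∫ x, u x * (φ (x + h • e) + φ (x - h • e) - 2 * φ x)| ≤ h^2 * M := by
    intro h hh0 hh1
    set a : E := h • e with ha
    have hna : ‖a‖ = h := by
      rw [ha, norm_smul, he, Real.norm_eq_abs, abs_of_pos hh0, mul_one]
    have iφ : ∀ b c : E, Integrable (fun x => u (x + b) * φ (x + c)) :=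
      fun b c => aux_int u φ hu hφ.continuous hφc b c
    have iψ : ∀ b c : E, Integrable (fun x => u (x + b) * ψ (x + c)) :=
      fun b c => aux_int u ψ hu hψcont hψ_cpt b c
    have int_uφa : Integrable (fun x => u x * φ (x + a)) := by simpa using iφ 0 a
    have int_uφma : Integrable (fun x => u x * φ (x - a)) := by
      simpa [sub_eq_add_neg] using iφ 0 (-a)
    have int_uφ : Integrable (fun x => u x * φ x) := by simpa using iφ 0 0
    have int_uaφ : Integrable (fun x => u (x + a) * φ x) := by simpa using iφ a 0
    have int_umaφ : Integrable (fun x => u (x - a) * φ x) := by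
      simpa [sub_eq_add_neg] using iφ (-a) 0
    have int_uaψa : Integrable (fun x => u (x + a) * ψ (x + a)) := iψ a a
    have int_uaψ : Integrable (fun x => u (x + a) * ψ x) := by simpa using iψ a 0
    have int_umaψ : Integrable (fun x => u (x - a) * ψ x) := by
      simpa [sub_eq_add_neg] using iψ (-a) 0
    have int_uψa : Integrable (fun x => u x * ψ (x + a)) := by simpa using iψ 0 a
    have int_uψ : Integrable (fun x => u x * ψ x) := by simpa using iψ 0 0
    -- identity A: move the second difference to u
    have expandL : ∫ x, u x * (φ (x + a) + φ (x - a) - 2 * φ x)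
        = (∫ x, u x * φ (x + a)) + (∫ x, u x * φ (x - a)) - 2 * ∫ x, u x * φ x := by
      have hpt : ∀ x : E, u x * (φ (x + a) + φ (x - a) - 2 * φ x)
          = u x * φ (x + a) + u x * φ (x - a) - 2 * (u x * φ x) := fun x => by ring
      simp_rw [hpt]
      have iAB : Integrable (fun x : E => u x * φ (x + a) + u x * φ (x - a)) :=
        int_uφa.add int_uφma
      have iC : Integrable (fun x : E => 2 * (u x * φ x)) := int_uφ.const_mul 2
      rw [integral_sub iAB iC, integral_add int_uφa int_uφma, integral_const_mul]
    have expandR : ∫ x, (u (x + a) + u (x - a) - 2 * u x) * φ x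
        = (∫ x, u (x + a) * φ x) + (∫ x, u (x - a) * φ x) - 2 * ∫ x, u x * φ x := by
      have hpt : ∀ x : E, (u (x + a) + u (x - a) - 2 * u x) * φ x
          = u (x + a) * φ x + u (x - a) * φ x - 2 * (u x * φ x) := fun x => by ring
      simp_rw [hpt]
      have iAB : Integrable (fun x : E => u (x + a) * φ x + u (x - a) * φ x) :=
        int_uaφ.add int_umaφ
      have iC : Integrable (fun x : E => 2 * (u x * φ x)) := int_uφ.const_mul 2
      rw [integral_sub iAB iC, integral_add int_uaφ int_umaφ, integral_const_mul]
    have T1 : ∫ x, u x * φ (x + a) = ∫ x, u (x - a) * φ x := aux_trans u φ a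
    have T2 : ∫ x, u x * φ (x - a) = ∫ x, u (x + a) * φ x := by
      have := aux_trans u φ (-a)
      simpa [sub_eq_add_neg, sub_neg_eq_add] using this
    have idA : ∫ x, u x * (φ (x + a) + φ (x - a) - 2 * φ x)
        = ∫ x, (u (x + a) + u (x - a) - 2 * u x) * φ x := by
      rw [expandL, expandR, T1, T2]; ring
    -- the semiconcavity bound
    have hg0 : ∀ x : E, 0 ≤ C * h^2 - (u (x + a) + u (x - a) - 2 * u x) := by
      intro x
      have := aux_semiconcave u C hConc x a
      rw [hna] at this
      linarith
    set g : E → ℝ := fun x => C * h^2 - (u (x + a) + u (x - a) - 2 * u x) with hgdef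
    have hg_cont : Continuous g := by
      apply continuous_const.sub
      exact ((hu.comp (continuous_id.add continuous_const)).add
        (hu.comp (continuous_id.sub continuous_const))).sub ((continuous_const.mul hu).comp continuous_id) |>.comp continuous_id
    have int_gφ : Integrable (fun x => g x * φ x) :=
      (hg_cont.mul hφ.continuous).integrable_of_hasCompactSupport hφc.mul_left
    have split : ∫ x, (u (x + a) + u (x - a) - 2 * u x) * φ x
        = C * h^2 * (∫ x, φ x) - ∫ x, g x * φ x := by
      have hpt : ∀ x : E, (u (x + a) + u (x - a) - 2 * u x) * φ x
          = C * h^2 * φ x - g x * φ x := fun x => by simp only [hgdef]; ring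
      simp_rw [hpt]
      have iA : Integrable (fun x : E => C * h^2 * φ x) := hφint.const_mul _
      rw [integral_sub iA int_gφ, integral_const_mul]
    -- bound on ∫ g φ via ψ
    have habs : |∫ x, g x * φ x| ≤ ∫ x, g x * ψ x := by
      have i1 : Integrable (fun x => g x * |φ x|) :=
        (hg_cont.mul hφ.continuous.abs).integrable_of_hasCompactSupport hφc.abs.mul_left
      have i2 : Integrable (fun x => g x * ψ x) :=
        (hg_cont.mul hψcont).integrable_of_hasCompactSupport hψ_cpt.mul_left
      calc |∫ x, g x * φ x| ≤ ∫ x, |g x * φ x| := by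
            have := norm_integral_le_integral_norm (μ := (volume : Measure E))
              (fun x => g x * φ x)
            simp only [Real.norm_eq_abs] at this
            exact this
        _ = ∫ x, g x * |φ x| := by
            congr 1; funext x; rw [abs_mul, abs_of_nonneg (hg0 x)]
        _ ≤ ∫ x, g x * ψ x :=
            integral_mono i1 i2 (fun x => mul_le_mul_of_nonneg_left (hφψ x) (hg0 x))
    -- compute ∫ g ψ
    have int_sumψ : Integrable (fun x => (u (x + a) + u (x - a) - 2 * u x) * ψ x) := by
      have heq : (fun x : E => (u (x + a) + u (x - a) - 2 * u x) * ψ x)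
          = fun x => u (x + a) * ψ x + u (x - a) * ψ x - 2 * (u x * ψ x) :=
        funext fun x => by ring
      rw [heq]
      exact (int_uaψ.add int_umaψ).sub (int_uψ.const_mul 2)
    have hgψ : ∫ x, g x * ψ x
        = C * h^2 * (∫ x, ψ x) - ∫ x, (u (x + a) + u (x - a) - 2 * u x) * ψ x := by
      have hpt : ∀ x : E, g x * ψ x
          = C * h^2 * ψ x - (u (x + a) + u (x - a) - 2 * u x) * ψ x :=
        fun x => by simp only [hgdef]; ring
      simp_rw [hpt]
      have iA : Integrable (fun x : E => C * h^2 * ψ x) := hψint.const_mul _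
      rw [integral_sub iA int_sumψ, integral_const_mul]
    -- identity B
    have idB : ∫ x, (u (x + a) + u (x - a) - 2 * u x) * ψ x
        = -∫ x, (u (x + a) - u x) * (ψ (x + a) - ψ x) := by
      have hpt : ∀ x : E, (u (x + a) - u x) * (ψ (x + a) - ψ x)
          = u (x + a) * ψ (x + a) - u (x + a) * ψ x - u x * ψ (x + a) + u x * ψ x :=
        fun x => by ring
      have eRHS : ∫ x, (u (x + a) - u x) * (ψ (x + a) - ψ x)
          = (∫ x, u (x + a) * ψ (x + a)) - (∫ x, u (x + a) * ψ x)
            - (∫ x, u x * ψ (x + a)) + ∫ x, u x * ψ x := by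
        simp_rw [hpt]
        have i1 : Integrable (fun x : E => u (x + a) * ψ (x + a) - u (x + a) * ψ x) :=
          int_uaψa.sub int_uaψ
        have i2 : Integrable
            (fun x : E => u (x + a) * ψ (x + a) - u (x + a) * ψ x - u x * ψ (x + a)) :=
          i1.sub int_uψa
        rw [integral_add i2 int_uψ, integral_sub i1 int_uψa, integral_sub int_uaψa int_uaψ]
      have eLHS : ∫ x, (u (x + a) + u (x - a) - 2 * u x) * ψ x
          = (∫ x, u (x + a) * ψ x) + (∫ x, u (x - a) * ψ x) - 2 * ∫ x, u x * ψ x := by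
        have hpt2 : ∀ x : E, (u (x + a) + u (x - a) - 2 * u x) * ψ x
            = u (x + a) * ψ x + u (x - a) * ψ x - 2 * (u x * ψ x) := fun x => by ring
        simp_rw [hpt2]
        have iAB : Integrable (fun x : E => u (x + a) * ψ x + u (x - a) * ψ x) :=
          int_uaψ.add int_umaψ
        have iC : Integrable (fun x : E => 2 * (u x * ψ x)) := int_uψ.const_mul 2
        rw [integral_sub iAB iC, integral_add int_uaψ int_umaψ, integral_const_mul]
      have Jself : ∫ x, u (x + a) * ψ (x + a) = ∫ x, u x * ψ x :=
        integral_add_right_eq_self (μ := (volume : Measure E)) (fun y => u y * ψ y) a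
      have J1 : ∫ x, u x * ψ (x + a) = ∫ x, u (x - a) * ψ x := aux_trans u ψ a
      rw [eLHS, eRHS, Jself, J1]; ring
    -- bound on the difference-quotient integral
    have bound_D : |∫ x, (u (x + a) - u x) * (ψ (x + a) - ψ x)|
        ≤ (L*h) * ((K:ℝ)*h) * (volume (ball (0:E) (3*R))).toReal := by
      have hcompl : ∀ x : E, x ∉ ball (0:E) (3*R) →
          (u (x + a) - u x) * (ψ (x + a) - ψ x) = 0 := by
        intro x hx
        have hxn : 3*R ≤ ‖x‖ := by
          simpa [mem_ball, dist_zero_right, not_lt] using hx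
        have h1 : ψ x = 0 := hψ_eq_zero x (by linarith)
        have h2 : ψ (x + a) = 0 := by
          apply hψ_eq_zero
          have htr : ‖x‖ ≤ ‖x + a‖ + ‖a‖ := by
            calc ‖x‖ = ‖(x + a) - a‖ := by rw [add_sub_cancel_right]
              _ ≤ ‖x + a‖ + ‖a‖ := norm_sub_le _ _
          rw [hna] at htr
          linarith
        rw [h1, h2]; ring
      rw [← setIntegral_eq_integral_of_forall_compl_eq_zero hcompl]
      have hb : ∀ x ∈ ball (0:E) (3*R),
          ‖(u (x + a) - u x) * (ψ (x + a) - ψ x)‖ ≤ (L*h) * ((K:ℝ)*h) := by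
        intro x _
        rw [Real.norm_eq_abs, abs_mul]
        have hxa : (x + a) - x = a := by abel
        have b1 : |u (x + a) - u x| ≤ L * h := by
          have := hLip (x + a) x
          rwa [hxa, hna] at this
        have b2 : |ψ (x + a) - ψ x| ≤ (K:ℝ) * h := by
          have := hψLip (x + a) x
          rwa [hxa, hna] at this
        exact mul_le_mul b1 b2 (abs_nonneg _) (by positivity)
      have hmeas : AEStronglyMeasurable
          (fun x : E => (u (x + a) - u x) * (ψ (x + a) - ψ x))
          (volume.restrict (ball (0:E) (3*R))) := by
        exact (((hu.comp (continuous_id.add continuous_const)).sub hu).mul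
          ((hψcont.comp (continuous_id.add continuous_const)).sub hψcont)).aestronglyMeasurable.restrict
      have := norm_setIntegral_le_of_norm_le_const (μ := volume) measure_ball_lt_top hb
      simp only [Real.norm_eq_abs] at this
      exact this
    -- assemble
    have volR := volconv R (le_of_lt hR0)
    have vol2R := volconv (2*R) (by positivity)
    have vol3R := volconv (3*R) (by positivity)
    have step1 : ∫ x, g x * ψ x ≤ C * h^2 * ((2*R)^d*V) + (L*h) * ((K:ℝ)*h) * ((3*R)^d*V) := by
      rw [hgψ, idB]
      have e1 : C * h^2 * (∫ x, ψ x) ≤ C * h^2 * ((2*R)^d*V) := by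
        rw [← vol2R]
        exact mul_le_mul_of_nonneg_left bound_intψ (by positivity)
      have e2 : -(-∫ x, (u (x + a) - u x) * (ψ (x + a) - ψ x))
          ≤ (L*h) * ((K:ℝ)*h) * ((3*R)^d*V) := by
        rw [neg_neg, ← vol3R]
        exact le_trans (le_abs_self _) bound_D
      linarith [e1, e2]
    calc |∫ x, u x * (φ (x + a) + φ (x - a) - 2 * φ x)|
        = |C * h^2 * (∫ x, φ x) - ∫ x, g x * φ x| := by rw [idA, split]
      _ ≤ |C * h^2 * (∫ x, φ x)| + |∫ x, g x * φ x| := abs_sub _ _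
      _ = C * h^2 * |∫ x, φ x| + |∫ x, g x * φ x| := by
          rw [abs_mul, abs_of_nonneg (by positivity : (0:ℝ) ≤ C * h^2)]
      _ ≤ C * h^2 * (R^d*V) + (C * h^2 * ((2*R)^d*V) + (L*h) * ((K:ℝ)*h) * ((3*R)^d*V)) := by
          have e1 : C * h^2 * |∫ x, φ x| ≤ C * h^2 * (R^d*V) := by
            rw [← volR]
            exact mul_le_mul_of_nonneg_left bound_intφ (by positivity)
          have e2 := le_trans habs step1
          linarith
      _ = h^2 * M := by rw [hM]; ring
  -- facts about the Hessian function H x = hess φ x e e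
  have hH_cont : Continuous (fun x : E => hess φ x e e) := by
    have h1 : ContDiff ℝ (⊤ : ℕ∞) (fderiv ℝ φ) := hφ.fderiv_right (m := (⊤ : ℕ∞)) le_rfl
    have h2 : Continuous (fderiv ℝ (fderiv ℝ φ)) := h1.continuous_fderiv (by simp)
    exact (h2.clm_apply continuous_const).clm_apply continuous_const
  have hH_cpt : HasCompactSupport (fun x : E => hess φ x e e) := by
    have h3 := ((hφc.fderiv ℝ).fderiv ℝ).comp_left
      (g := fun A : E →L[ℝ] (E →L[ℝ] ℝ) => A e e) (by simp)
    exact h3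
  have hH_zero : ∀ x : E, R ≤ ‖x‖ → hess φ x e e = 0 := by
    intro x hx
    have hsub : tsupport (fderiv ℝ (fderiv ℝ φ)) ⊆ ball (0:E) R :=
      (tsupport_fderiv_subset ℝ).trans ((tsupport_fderiv_subset ℝ).trans hφsupp)
    have hx' : x ∉ tsupport (fderiv ℝ (fderiv ℝ φ)) := fun hmem => by
      have := hsub hmem
      rw [mem_ball, dist_zero_right] at this
      linarith
    have h0 : fderiv ℝ (fderiv ℝ φ) x = 0 := image_eq_zero_of_notMem_tsupport hx'
    simp [hess, h0]
  have int_uH : Integrable (fun x => u x * hess φ x e e) :=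
    (hu.mul hH_cont).integrable_of_hasCompactSupport hH_cpt.mul_left
  have hUC : UniformContinuous (fun x : E => hess φ x e e) :=
    hH_cpt.uniformContinuous_of_continuous hH_cont
  -- main epsilon argument
  have main : ∀ ε : ℝ, 0 < ε → |∫ x, u x * hess φ x e e| ≤ M + ε := by
    intro ε hε
    set Mu : ℝ := |u 0| + L * (R + 1) with hMu
    have hMu0 : 0 ≤ Mu := by positivity
    set volS : ℝ := (volume (closedBall (0:E) (R+1))).toReal with hvolS
    have hvolS0 : 0 ≤ volS := ENNReal.toReal_nonneg
    set ε' : ℝ := ε / (2 * (Mu + 1) * (volS + 1)) with hε'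
    have hε'0 : 0 < ε' := by positivity
    obtain ⟨δ, hδ0, hδ⟩ := Metric.uniformContinuous_iff.mp hUC ε' hε'0
    set h : ℝ := min (δ/2) 1 with hh
    have hh0 : 0 < h := lt_min (by positivity) one_pos
    have hh1 : h ≤ 1 := min_le_right _ _
    have hhδ : h < δ := lt_of_le_of_lt (min_le_left _ _) (by linarith)
    have hpt : ∀ x : E,
        |φ (x + h•e) + φ (x - h•e) - 2*φ x - h^2 * hess φ x e e| ≤ 2*ε'*h^2 := by
      intro x
      apply aux_taylor φ hφ x e h ε' hh0 (le_of_lt hε'0)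
      intro t ht
      have hdist : dist (x + t•e) x < δ := by
        rw [dist_eq_norm, add_sub_cancel_left, norm_smul, he, mul_one, Real.norm_eq_abs]
        exact lt_of_le_of_lt ht hhδ
      have := hδ hdist
      rw [Real.dist_eq] at this
      exact le_of_lt this
    have hSzero : ∀ x : E, x ∉ closedBall (0:E) (R+1) →
        u x * (h^2 * hess φ x e e - (φ (x + h•e) + φ (x - h•e) - 2*φ x)) = 0 := by
      intro x hx
      rw [mem_closedBall, dist_zero_right, not_le] at hx
      have h1 : hess φ x e e = 0 := hH_zero x (by linarith)
      have hnorm : ∀ t : ℝ, |t| ≤ 1 → R ≤ ‖x + t•e‖ := by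
        intro t ht
        have htr : ‖x‖ ≤ ‖x + t•e‖ + ‖t•e‖ := by
          calc ‖x‖ = ‖(x + t•e) - t•e‖ := by rw [add_sub_cancel_right]
            _ ≤ _ := norm_sub_le _ _
        rw [norm_smul, he, mul_one, Real.norm_eq_abs] at htr
        linarith
      have h2 : φ (x + h•e) = 0 := hφ_zero _ (hnorm h (by rw [abs_of_pos hh0]; exact hh1))
      have h3 : φ (x - h•e) = 0 := by
        have := hnorm (-h) (by rw [abs_neg, abs_of_pos hh0]; exact hh1)
        rw [neg_smul, ← sub_eq_add_neg] at this
        exact hφ_zero _ this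
      have h4 : φ x = 0 := hφ_zero x (by linarith)
      rw [h1, h2, h3, h4]; ring
    have hSb : ∀ x ∈ closedBall (0:E) (R+1),
        ‖u x * (h^2 * hess φ x e e - (φ (x + h•e) + φ (x - h•e) - 2*φ x))‖
          ≤ Mu * (2*ε'*h^2) := by
      intro x hx
      rw [mem_closedBall, dist_zero_right] at hx
      rw [Real.norm_eq_abs, abs_mul]
      have b1 : |u x| ≤ Mu := by
        have hL0 := hLip x 0
        rw [sub_zero] at hL0
        have htri : |u x| ≤ |u x - u 0| + |u 0| := by
          calc |u x| = |(u x - u 0) + u 0| := by ring_nf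
            _ ≤ _ := abs_add_le _ _
        have hLx : L * ‖x‖ ≤ L * (R + 1) := mul_le_mul_of_nonneg_left hx hL
        rw [hMu]
        linarith
      have b2 : |h^2 * hess φ x e e - (φ (x + h•e) + φ (x - h•e) - 2*φ x)| ≤ 2*ε'*h^2 := by
        rw [abs_sub_comm]
        exact hpt x
      exact mul_le_mul b1 b2 (abs_nonneg _) hMu0
    have iΔ : Integrable (fun x : E => u x * (φ (x + h•e) + φ (x - h•e) - 2*φ x)) := by
      have i1 : Integrable (fun x : E => u x * φ (x + h•e)) := by
        simpa using aux_int u φ hu hφ.continuous hφc 0 (h•e)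
      have i2 : Integrable (fun x : E => u x * φ (x - h•e)) := by
        simpa [sub_eq_add_neg] using aux_int u φ hu hφ.continuous hφc 0 (-(h•e))
      have i3 : Integrable (fun x : E => u x * φ x) := by
        simpa using aux_int u φ hu hφ.continuous hφc 0 0
      have heq : (fun x : E => u x * (φ (x + h•e) + φ (x - h•e) - 2*φ x))
          = fun x => u x * φ (x + h•e) + u x * φ (x - h•e) - 2*(u x * φ x) :=
        funext fun x => by ring
      rw [heq]
      exact (i1.add i2).sub (i3.const_mul 2)
    have hdiffint :
        |h^2 * (∫ x, u x * hess φ x e e)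
          - ∫ x, u x * (φ (x + h•e) + φ (x - h•e) - 2*φ x)|
        ≤ Mu * (2*ε'*h^2) * volS := by
      have hpt2 : ∀ x : E,
          u x * (h^2 * hess φ x e e - (φ (x + h•e) + φ (x - h•e) - 2*φ x))
          = h^2 * (u x * hess φ x e e) - u x * (φ (x + h•e) + φ (x - h•e) - 2*φ x) :=
        fun x => by ring
      have iA : Integrable (fun x : E => h^2 * (u x * hess φ x e e)) := int_uH.const_mul _
      have e0 : h^2 * (∫ x, u x * hess φ x e e)
          - (∫ x, u x * (φ (x + h•e) + φ (x - h•e) - 2*φ x))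
          = ∫ x, u x * (h^2 * hess φ x e e - (φ (x + h•e) + φ (x - h•e) - 2*φ x)) := by
        simp_rw [hpt2]
        rw [integral_sub iA iΔ, integral_const_mul]
      rw [e0, ← setIntegral_eq_integral_of_forall_compl_eq_zero hSzero]
      have hmeas : AEStronglyMeasurable
          (fun x : E => u x * (h^2 * hess φ x e e - (φ (x + h•e) + φ (x - h•e) - 2*φ x)))
          (volume.restrict (closedBall (0:E) (R+1))) := by
        apply Continuous.aestronglyMeasurable ?_ |>.restrict
        exact hu.mul ((continuous_const.mul hH_cont).sub
          (((hφ.continuous.comp (continuous_id.add continuous_const)).add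
            (hφ.continuous.comp (continuous_id.sub continuous_const))).sub
            (continuous_const.mul hφ.continuous)))
      have := norm_setIntegral_le_of_norm_le_const (μ := volume)
        measure_closedBall_lt_top hSb
      simp only [Real.norm_eq_abs] at this
      exact this
    have hkey := key h hh0 hh1
    have hcomb : h^2 * |∫ x, u x * hess φ x e e|
        ≤ h^2 * (M + Mu * (2*ε') * volS) := by
      have c1 : h^2 * |∫ x, u x * hess φ x e e| = |h^2 * ∫ x, u x * hess φ x e e| := by
        rw [abs_mul, abs_of_nonneg (by positivity : (0:ℝ) ≤ h^2)]
      have c2 : |h^2 * ∫ x, u x * hess φ x e e|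
          ≤ |h^2 * (∫ x, u x * hess φ x e e)
              - ∫ x, u x * (φ (x + h•e) + φ (x - h•e) - 2*φ x)|
            + |∫ x, u x * (φ (x + h•e) + φ (x - h•e) - 2*φ x)| := by
        calc |h^2 * ∫ x, u x * hess φ x e e|
            = |(h^2 * (∫ x, u x * hess φ x e e)
                - ∫ x, u x * (φ (x + h•e) + φ (x - h•e) - 2*φ x))
              + ∫ x, u x * (φ (x + h•e) + φ (x - h•e) - 2*φ x)| := by
              congr 1
              ring
          _ ≤ _ := abs_add_le _ _
      have c3 : Mu * (2*ε'*h^2) * volS = h^2 * (Mu * (2*ε') * volS) := by ring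
      calc h^2 * |∫ x, u x * hess φ x e e|
          = |h^2 * ∫ x, u x * hess φ x e e| := c1
        _ ≤ Mu * (2*ε'*h^2) * volS + h^2 * M := le_trans c2 (add_le_add hdiffint hkey)
        _ = h^2 * (M + Mu * (2*ε') * volS) := by ring
    have hdiv : |∫ x, u x * hess φ x e e| ≤ M + Mu * (2*ε') * volS :=
      le_of_mul_le_mul_left hcomb (by positivity)
    refine le_trans hdiv (add_le_add_right ?_ M)
    have hD : (0:ℝ) < 2 * (Mu + 1) * (volS + 1) := by positivity
    calc Mu * (2*ε') * volS
        = ε * ((2 * Mu * volS) / (2 * (Mu + 1) * (volS + 1))) := by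
          rw [hε']; ring
      _ ≤ ε * 1 := by
          apply mul_le_mul_of_nonneg_left _ (le_of_lt hε)
          rw [div_le_one hD]
          nlinarith [hMu0, hvolS0]
      _ = ε := mul_one ε
  -- conclude |I| ≤ M
  have hIM : |∫ x, u x * hess φ x e e| ≤ M := by
    by_contra hcon
    push_neg at hcon
    have := main ((|∫ x, u x * hess φ x e e| - M)/2) (by linarith)
    linarith
  -- final arithmetic
  refine le_trans hIM ?_
  rw [hM]
  have hRd : (0:ℝ) < R^d := by positivity
  have h2d : (2:ℝ)^d ≤ 3^d := pow_le_pow_left₀ (by norm_num) (by norm_num) d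
  have h1d : (1:ℝ) ≤ 3^d := one_le_pow₀ (by norm_num)
  have h3d : (0:ℝ) < 3^d := by positivity
  have e2R : ((2:ℝ)*R)^d = 2^d * R^d := mul_pow 2 R d
  have e3R : ((3:ℝ)*R)^d = 3^d * R^d := mul_pow 3 R d
  rw [e2R, e3R]
  have base : C * (R^d*V) + C * (2^d*R^d*V) + L * (K:ℝ) * (3^d*R^d*V)
      ≤ ((2 + (K:ℝ)) * 3^d * V) * (L + C) * R^d := by
    have q0 : 0 ≤ V * R^d := by positivity
    have t1 : C * (R^d*V) + C * (2^d*R^d*V) ≤ 2 * C * (3^d * V * R^d) := by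
      have : (1:ℝ) + 2^d ≤ 2 * 3^d := by linarith
      nlinarith [mul_nonneg hC q0]
    have t2 : L * (K:ℝ) * (3^d*R^d*V) = (K:ℝ) * L * (3^d * V * R^d) := by ring
    have t3 : ((2 + (K:ℝ)) * 3^d * V) * (L + C) * R^d
        = (2*L + 2*C + (K:ℝ)*L + (K:ℝ)*C) * (3^d * V * R^d) := by ring
    have q1 : 0 ≤ 3^d * V * R^d := by positivity
    have t4 : 0 ≤ (2*L + (K:ℝ)*C) * (3^d * V * R^d) := by positivity
    nlinarith [t1, t4, mul_nonneg (mul_nonneg hK0 hL) q1]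
  have extra : 0 ≤ 1 * (L + C) * R^d := by positivity
  calc C * (R^d*V) + C * (2^d*R^d*V) + L * (K:ℝ) * (3^d*R^d*V)
      ≤ ((2 + (K:ℝ)) * 3^d * V) * (L + C) * R^d := base
    _ ≤ ((2 + (K:ℝ)) * 3^d * V + 1) * (L + C) * R^d := by nlinarith [extra]
end

section
/- Let d ≥ 1, λ > 0, K > 0, T > 0, and for (t,x) ∈ [0,T] × ℝ^d set ψ(t,x) := exp( − ((|x| − K t)₊)² / (4 λ (t+1)) ). Then for every t ∈ [0,T] and every x ∈ ℝ^d with |x| ≠ K t, the function ψ is differentiable in t at (t,x), and twice differentiable in x at (t,x), and the following differential inequality holds: ∂_t ψ(t,x) − λ · m₊(D²_x ψ(t,x)) − K · |D_x ψ(t,x)| ≥ 0, where D_x ψ and D²_x ψ denote the spatial gradient and spatial Hessian of ψ. -/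
open Real Filter Topology

noncomputable def innerSL' (d : ℕ) : EuclideanSpace ℝ (Fin d) →L[ℝ]
    EuclideanSpace ℝ (Fin d) →L[ℝ] ℝ := by exact innerSL ℝ

@[simp] theorem innerSL'_apply {d : ℕ} (x v : EuclideanSpace ℝ (Fin d)) :
    innerSL' d x v = inner ℝ x v := rfl

theorem innerSL'_eq {d : ℕ} (x : EuclideanSpace ℝ (Fin d)) :
    innerSL' d x = innerSL ℝ x := rfl

section aux

theorem hasFDerivAt_norm' {d : ℕ} (x : EuclideanSpace ℝ (Fin d)) (hx : x ≠ 0) :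
    HasFDerivAt (fun y : EuclideanSpace ℝ (Fin d) => ‖y‖) ((‖x‖)⁻¹ • innerSL ℝ x) x := by
  have hsq : HasFDerivAt (fun y : EuclideanSpace ℝ (Fin d) => ‖y‖^2)
      (2 • (innerSL ℝ x)) x := (hasStrictFDerivAt_norm_sq x).hasFDerivAt
  have hx' : (0:ℝ) < ‖x‖ := norm_pos_iff.2 hx
  have hs : HasDerivAt Real.sqrt (1/(2*Real.sqrt (‖x‖^2))) (‖x‖^2) :=
    Real.hasDerivAt_sqrt (by positivity)
  have := hs.comp_hasFDerivAt x hsq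
  have heq : (fun y : EuclideanSpace ℝ (Fin d) => Real.sqrt (‖y‖^2)) = fun y => ‖y‖ := by
    funext y; rw [Real.sqrt_sq (norm_nonneg y)]
  rw [Function.comp_def, heq] at this
  refine this.congr_fderiv (Eq.symm ?_)
  rw [Real.sqrt_sq (norm_nonneg x)]
  ext v
  simp [smul_smul]
  ring

noncomputable def phi (A c r : ℝ) : ℝ := Real.exp (-(r - A)^2 / c)
noncomputable def phi' (A c r : ℝ) : ℝ := (-(2*(r-A)/c)) * phi A c r
noncomputable def phi'' (A c r : ℝ) : ℝ := (-(2/c) + (2*(r-A)/c)^2) * phi A c r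
noncomputable def gg (A c r : ℝ) : ℝ := phi' A c r * r⁻¹
noncomputable def gg' (A c r : ℝ) : ℝ := phi'' A c r * r⁻¹ + phi' A c r * (-((r^2)⁻¹))

theorem hasDerivAt_phi (A c r : ℝ) (hc : c ≠ 0) : HasDerivAt (phi A c) (phi' A c r) r := by
  have h1 : HasDerivAt (fun s : ℝ => -(s - A)^2 / c) (-(2*(r-A))/c) r := by
    have h0 : HasDerivAt (fun s : ℝ => s - A) 1 r := (hasDerivAt_id r).sub_const A
    have := ((h0.pow 2).neg).div_const c
    refine this.congr_deriv (Eq.symm ?_)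
    push_cast; ring
  have := h1.exp
  refine this.congr_deriv (Eq.symm ?_)
  unfold phi' phi
  ring

theorem hasDerivAt_phi' (A c r : ℝ) (hc : c ≠ 0) :
    HasDerivAt (phi' A c) (phi'' A c r) r := by
  have h0 : HasDerivAt (fun s : ℝ => -(2*(s-A)/c)) (-(2/c)) r := by
    have h1 : HasDerivAt (fun s : ℝ => s - A) 1 r := (hasDerivAt_id r).sub_const A
    have := ((h1.const_mul 2).div_const c).neg
    refine this.congr_deriv (Eq.symm ?_)
    ring
  have := h0.mul (hasDerivAt_phi A c r hc)
  refine this.congr_deriv (Eq.symm ?_)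
  unfold phi'' phi'
  ring

theorem hasDerivAt_gg (A c r : ℝ) (hc : c ≠ 0) (hr : r ≠ 0) :
    HasDerivAt (gg A c) (gg' A c r) r := by
  have := (hasDerivAt_phi' A c r hc).mul (hasDerivAt_inv hr)
  exact this

end aux

section spatial
variable {d : ℕ}

theorem hasFDerivAt_phi_norm (A c : ℝ) (hc : c ≠ 0) (y : EuclideanSpace ℝ (Fin d)) (hy : y ≠ 0) :
    HasFDerivAt (fun z : EuclideanSpace ℝ (Fin d) => phi A c ‖z‖)
      ((gg A c ‖y‖) • innerSL ℝ y) y := by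
  have h := (hasDerivAt_phi A c ‖y‖ hc).comp_hasFDerivAt y (hasFDerivAt_norm' y hy)
  refine h.congr_fderiv (Eq.symm ?_)
  unfold gg
  rw [smul_smul]

theorem hasFDerivAt_gg_norm (A c : ℝ) (hc : c ≠ 0) (x : EuclideanSpace ℝ (Fin d)) (hx : x ≠ 0) :
    HasFDerivAt (fun z : EuclideanSpace ℝ (Fin d) => gg A c ‖z‖)
      ((gg' A c ‖x‖ * ‖x‖⁻¹) • innerSL ℝ x) x := by
  have h := (hasDerivAt_gg A c ‖x‖ hc (norm_ne_zero_iff.2 hx)).comp_hasFDerivAt x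
    (hasFDerivAt_norm' x hx)
  refine h.congr_fderiv (Eq.symm ?_)
  rw [smul_smul]

end spatial

theorem quad_bound (lam t a r p w : ℝ) (hlam : 0 < lam) (ht : 0 ≤ t) (ha : 0 < a)
    (hr : 0 < r) (E0 : ℝ) (hE : 0 < E0) (hp2 : p^2 ≤ r^2 * w) (hw : w ≤ 1) (hw0 : 0 ≤ w) :
    ((-(2*a/(4*lam*(t+1))))*E0 * r⁻¹) * w
      + (((-(2/(4*lam*(t+1))) + (2*a/(4*lam*(t+1)))^2)*E0 * r⁻¹
          + (-(2*a/(4*lam*(t+1))))*E0 * (-((r^2)⁻¹))) * r⁻¹) * p^2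
      ≤ E0 * a^2/(4*lam*(t+1)^2) / lam := by
  have ht1 : (0:ℝ) < t + 1 := by linarith
  set c := 4*lam*(t+1) with hc
  have hc0 : 0 < c := by positivity
  set q : ℝ := p^2 / r^2 with hq
  have hq0 : 0 ≤ q := by positivity
  have hqw : q ≤ w := by
    rw [hq, div_le_iff₀ (by positivity)]
    linarith [hp2]
  have hq1 : q ≤ 1 := hqw.trans hw
  -- rewrite LHS as phi''-form
  have hLHS : ((-(2*a/c))*E0 * r⁻¹) * w
      + (((-(2/c) + (2*a/c)^2)*E0 * r⁻¹ + (-(2*a/c))*E0 * (-((r^2)⁻¹))) * r⁻¹) * p^2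
      = (-(2/c) + (2*a/c)^2)*E0 * q + ((-(2*a/c))*E0 * r⁻¹) * (w - q) := by
    rw [hq]
    field_simp
    ring
  rw [hLHS]
  have h1 : ((-(2*a/c))*E0 * r⁻¹) * (w - q) ≤ 0 := by
    apply mul_nonpos_of_nonpos_of_nonneg
    · have : 0 < 2*a/c := by positivity
      have : 0 < 2*a/c * E0 * r⁻¹ := by positivity
      nlinarith
    · linarith
  have h2 : (-(2/c) + (2*a/c)^2)*E0 * q ≤ E0 * a^2/(4*lam*(t+1)^2) / lam := by
    rcases le_or_gt (-(2/c) + (2*a/c)^2) 0 with h | h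
    · have : (-(2/c) + (2*a/c)^2)*E0 * q ≤ 0 := by
        apply mul_nonpos_of_nonpos_of_nonneg _ hq0
        exact mul_nonpos_of_nonpos_of_nonneg h hE.le
      have hB : 0 ≤ E0 * a^2/(4*lam*(t+1)^2) / lam := by positivity
      linarith
    · have step : (-(2/c) + (2*a/c)^2)*E0 * q ≤ (-(2/c) + (2*a/c)^2)*E0 * 1 := by
        apply mul_le_mul_of_nonneg_left hq1
        positivity
      have heq : ((2*a/c)^2)*E0 = E0 * a^2/(4*lam*(t+1)^2) / lam := by
        rw [hc]; field_simp; ring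
      have hneg : (-(2/c))*E0 ≤ 0 := by
        have : 0 < 2/c := by positivity
        nlinarith
      calc (-(2/c) + (2*a/c)^2)*E0 * q ≤ (-(2/c) + (2*a/c)^2)*E0 * 1 := step
        _ = (-(2/c))*E0 + ((2*a/c)^2)*E0 := by ring
        _ ≤ ((2*a/c)^2)*E0 := by linarith
        _ = E0 * a^2/(4*lam*(t+1)^2) / lam := heq
  linarith

theorem hasDerivAt_time (lam K r t : ℝ) (hD : 4*lam*(t+1) ≠ 0) :
    HasDerivAt (fun s : ℝ => Real.exp (-(r - K*s)^2/(4*lam*(s+1))))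
      (Real.exp (-(r-K*t)^2/(4*lam*(t+1))) *
        ((2*K*(r-K*t)*(4*lam*(t+1)) + (r-K*t)^2*(4*lam))/(4*lam*(t+1))^2)) t := by
  have hlin : HasDerivAt (fun s : ℝ => r - K*s) (-K) t := by
    refine (((hasDerivAt_id t).const_mul K).const_sub r).congr_deriv ?_
    simp
  have hN : HasDerivAt (fun s : ℝ => -(r - K*s)^2) (2*K*(r-K*t)) t := by
    have := (hlin.pow 2).neg
    refine this.congr_deriv (Eq.symm ?_)
    push_cast; ring
  have hDen : HasDerivAt (fun s : ℝ => 4*lam*(s+1)) (4*lam) t := by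
    simpa using ((hasDerivAt_id t).add_const 1).const_mul (4*lam)
  have hQ := hN.div hDen hD
  have := hQ.exp
  refine this.congr_deriv (Eq.symm ?_)
  simp only [Pi.div_apply]
  ring
/-- `m₊(D²f(x)) = sup_{|v| ≤ 1} D²f(x)[v,v]`. -/
noncomputable def mplus {d : ℕ} (f : EuclideanSpace ℝ (Fin d) → ℝ)
    (x : EuclideanSpace ℝ (Fin d)) : ℝ :=
  sSup {r : ℝ | ∃ v : EuclideanSpace ℝ (Fin d), ‖v‖ ≤ 1 ∧ r = hess f x v v}

/-- The test function `ψ_{λ,K}(t,x) = exp(-((|x|-Kt)₊)²/(4λ(t+1)))`. -/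
noncomputable def psi (d : ℕ) (lam K : ℝ) (t : ℝ) (x : EuclideanSpace ℝ (Fin d)) : ℝ :=
  Real.exp (-(max (‖x‖ - K * t) 0) ^ 2 / (4 * lam * (t + 1)))

set_option maxHeartbeats 1000000 in
/-- The differential inequality `∂_t ψ - λ m₊(D²_x ψ) - K |D_x ψ| ≥ 0` for the test
function `ψ_{λ,K}` (away from the kink `|x| = Kt`). -/
theorem psi_differential_inequality (d : ℕ) (hd : 1 ≤ d) (lam K T : ℝ)
    (hlam : 0 < lam) (hK : 0 < K) (hT : 0 < T) :
    ∀ t ∈ Set.Icc (0 : ℝ) T, ∀ x : EuclideanSpace ℝ (Fin d), ‖x‖ ≠ K * t →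
      DifferentiableAt ℝ (fun s => psi d lam K s x) t ∧
      DifferentiableAt ℝ (psi d lam K t) x ∧
      DifferentiableAt ℝ (fun y => fderiv ℝ (psi d lam K t) y) x ∧
      deriv (fun s => psi d lam K s x) t - lam * mplus (psi d lam K t) x
        - K * ‖gradient (psi d lam K t) x‖ ≥ 0 := by
  rintro t ⟨ht0, htT⟩ x hxne
  have ht1 : (0:ℝ) < t + 1 := by linarith
  have hc0 : (0:ℝ) < 4*lam*(t+1) := by positivity
  rcases lt_or_gt_of_ne hxne with hlt | hgt
  · -- flat region ‖x‖ < K t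
    have hKcont : ContinuousAt (fun s : ℝ => K * s) t :=
      (continuous_const.mul continuous_id).continuousAt
    have hev_t : (fun s => psi d lam K s x) =ᶠ[𝓝 t] fun _ => (1:ℝ) := by
      filter_upwards [(continuousAt_const (y := ‖x‖)).eventually_lt hKcont hlt] with s hs
      unfold psi
      rw [max_eq_right (by linarith)]
      norm_num
    have hdt : HasDerivAt (fun s => psi d lam K s x) 0 t :=
      (hasDerivAt_const t (1:ℝ)).congr_of_eventuallyEq hev_t
    have hUopen : IsOpen {y : EuclideanSpace ℝ (Fin d) | ‖y‖ < K*t} :=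
      isOpen_lt continuous_norm continuous_const
    have hpsi1 : ∀ y : EuclideanSpace ℝ (Fin d), ‖y‖ < K*t → psi d lam K t y = 1 := by
      intro y hy
      unfold psi
      rw [max_eq_right (by linarith)]
      norm_num
    have hev_x : psi d lam K t =ᶠ[𝓝 x] fun _ => (1:ℝ) :=
      Filter.eventuallyEq_of_mem (hUopen.mem_nhds hlt) (fun y hy => hpsi1 y hy)
    have hdiffx : DifferentiableAt ℝ (psi d lam K t) x :=
      (differentiableAt_const (1:ℝ)).congr_of_eventuallyEq hev_x
    have hfd0 : ∀ y ∈ {y : EuclideanSpace ℝ (Fin d) | ‖y‖ < K*t},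
        fderiv ℝ (psi d lam K t) y = 0 := by
      intro y hy
      have h : psi d lam K t =ᶠ[𝓝 y] fun _ => (1:ℝ) :=
        Filter.eventuallyEq_of_mem (hUopen.mem_nhds hy) (fun z hz => hpsi1 z hz)
      rw [h.fderiv_eq, fderiv_const_apply]
    have hev_fd : (fun y => fderiv ℝ (psi d lam K t) y) =ᶠ[𝓝 x]
        fun _ => (0 : EuclideanSpace ℝ (Fin d) →L[ℝ] ℝ) :=
      Filter.eventuallyEq_of_mem (hUopen.mem_nhds hlt) hfd0
    have hdiff2 : DifferentiableAt ℝ (fun y => fderiv ℝ (psi d lam K t) y) x :=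
      (differentiableAt_const _).congr_of_eventuallyEq hev_fd
    have hhess : fderiv ℝ (fderiv ℝ (psi d lam K t)) x = 0 := by
      rw [hev_fd.fderiv_eq, fderiv_const_apply]
    have hmp : mplus (psi d lam K t) x = 0 := by
      unfold mplus hess
      have hset : {r : ℝ | ∃ v : EuclideanSpace ℝ (Fin d), ‖v‖ ≤ 1 ∧
          r = fderiv ℝ (fderiv ℝ (psi d lam K t)) x v v} = {0} := by
        ext s
        simp only [Set.mem_setOf_eq, Set.mem_singleton_iff, hhess]
        constructor
        · rintro ⟨v, -, rfl⟩; simp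
        · rintro rfl; exact ⟨0, by simp, by simp⟩
      rw [hset, csSup_singleton]
    have hgrad : gradient (psi d lam K t) x = 0 := by
      rw [hev_x.gradient_eq, gradient_fun_const]
    refine ⟨hdt.differentiableAt, hdiffx, hdiff2, ?_⟩
    rw [hdt.deriv, hmp, hgrad]
    simp
  · -- region K t < ‖x‖
    have hA0 : 0 ≤ K*t := mul_nonneg hK.le ht0
    have hr0 : 0 < ‖x‖ := lt_of_le_of_lt hA0 hgt
    have hx0 : x ≠ 0 := norm_pos_iff.1 hr0
    have hcne : 4*lam*(t+1) ≠ 0 := ne_of_gt hc0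
    set A := K*t with hA
    set c : ℝ := 4*lam*(t+1) with hc
    set r := ‖x‖ with hr
    set a : ℝ := r - A with ha
    have ha0 : 0 < a := by simp only [ha]; linarith
    set E0 : ℝ := phi A c r with hE
    have hE0 : 0 < E0 := by rw [hE]; unfold phi; exact Real.exp_pos _
    -- time derivative
    have hKcont : ContinuousAt (fun s : ℝ => K * s) t :=
      (continuous_const.mul continuous_id).continuousAt
    have hev_t : (fun s => psi d lam K s x) =ᶠ[𝓝 t]
        (fun s => Real.exp (-(r - K*s)^2/(4*lam*(s+1)))) := by
      filter_upwards [hKcont.eventually_lt (continuousAt_const (y := ‖x‖)) hgt] with s hs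
      unfold psi
      rw [max_eq_left (by linarith)]
    have hdt : HasDerivAt (fun s => psi d lam K s x)
        (E0 * ((2*K*a*(4*lam*(t+1)) + a^2*(4*lam))/(4*lam*(t+1))^2)) t := by
      have h := hasDerivAt_time lam K r t hcne
      have h2 := h.congr_of_eventuallyEq hev_t
      exact h2
    -- spatial first derivative
    have hUopen : IsOpen {y : EuclideanSpace ℝ (Fin d) | A < ‖y‖} :=
      isOpen_lt continuous_const continuous_norm
    have hpsiphi : ∀ y : EuclideanSpace ℝ (Fin d), A < ‖y‖ → psi d lam K t y = phi A c ‖y‖ := by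
      intro y hy
      unfold psi phi
      rw [← hA, ← hc, max_eq_left (by linarith)]
    have hfd : ∀ y : EuclideanSpace ℝ (Fin d), A < ‖y‖ →
        HasFDerivAt (psi d lam K t) ((gg A c ‖y‖) • innerSL' d y) y := by
      intro y hy
      have hy0 : y ≠ 0 := norm_pos_iff.1 (lt_of_le_of_lt hA0 hy)
      refine (hasFDerivAt_phi_norm A c hcne y hy0).congr_of_eventuallyEq ?_
      exact Filter.eventuallyEq_of_mem (hUopen.mem_nhds hy) (fun z hz => hpsiphi z hz)
    have hdiffx : DifferentiableAt ℝ (psi d lam K t) x := (hfd x hgt).differentiableAt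
    have hev_fd : (fun y => fderiv ℝ (psi d lam K t) y) =ᶠ[𝓝 x]
        (fun y => (gg A c ‖y‖) • innerSL' d y) :=
      Filter.eventuallyEq_of_mem (hUopen.mem_nhds hgt) (fun y hy => (hfd y hy).fderiv)
    -- second derivative
    have hinner : HasFDerivAt (fun y : EuclideanSpace ℝ (Fin d) => innerSL' d y)
        (innerSL' d) x :=
      (innerSL' d).hasFDerivAt
    have hPhi : HasFDerivAt (fun y : EuclideanSpace ℝ (Fin d) => (gg A c ‖y‖) • innerSL' d y)
        ((gg A c r) • (innerSL' d)
          + ((gg' A c r * r⁻¹) • innerSL' d x).smulRight (innerSL' d x)) x :=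
      (hasFDerivAt_gg_norm A c hcne x hx0).smul hinner
    have hdiff2 : DifferentiableAt ℝ (fun y => fderiv ℝ (psi d lam K t) y) x :=
      hPhi.differentiableAt.congr_of_eventuallyEq hev_fd
    have hhess : fderiv ℝ (fderiv ℝ (psi d lam K t)) x
        = (gg A c r) • (innerSL' d)
          + ((gg' A c r * r⁻¹) • innerSL' d x).smulRight (innerSL' d x) := by
      rw [hev_fd.fderiv_eq, hPhi.fderiv]
    -- mplus bound
    have hmp : mplus (psi d lam K t) x ≤ E0 * a^2/(4*lam*(t+1)^2) / lam := by
      apply Real.sSup_le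
      · rintro s ⟨v, hv, rfl⟩
        unfold hess
        rw [hhess]
        have happ : ((gg A c r) • (innerSL' d)
            + ((gg' A c r * r⁻¹) • innerSL' d x).smulRight (innerSL' d x)) v v
            = gg A c r * ‖v‖^2
              + (gg' A c r * r⁻¹) * (inner ℝ x v) * (inner ℝ x v) := by
          simp only [ContinuousLinearMap.add_apply, ContinuousLinearMap.smul_apply,
            ContinuousLinearMap.smulRight_apply, innerSL'_apply, smul_eq_mul]
          rw [real_inner_self_eq_norm_sq]
        rw [happ]
        have hw0 : (0:ℝ) ≤ ‖v‖^2 := by positivity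
        have hw1 : ‖v‖^2 ≤ 1 := by nlinarith [norm_nonneg v]
        have hp2 : (inner ℝ x v)^2 ≤ r^2 * ‖v‖^2 := by
          have := real_inner_mul_inner_self_le x v
          rw [real_inner_self_eq_norm_sq, real_inner_self_eq_norm_sq] at this
          nlinarith [this]
        have hqb := quad_bound lam t a r (inner ℝ x v) (‖v‖^2) hlam ht0 ha0 hr0 E0 hE0
          hp2 hw1 hw0
        calc gg A c r * ‖v‖^2 + (gg' A c r * r⁻¹) * (inner ℝ x v) * (inner ℝ x v)
            = ((-(2*a/(4*lam*(t+1))))*E0 * r⁻¹) * (‖v‖^2)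
              + (((-(2/(4*lam*(t+1))) + (2*a/(4*lam*(t+1)))^2)*E0 * r⁻¹
                  + (-(2*a/(4*lam*(t+1))))*E0 * (-((r^2)⁻¹))) * r⁻¹) * (inner ℝ x v)^2 := by
              rw [hE]
              unfold gg gg' phi' phi'' 
              rw [ha, hA, hc]
              ring
          _ ≤ E0 * a^2/(4*lam*(t+1)^2) / lam := hqb
      · positivity
    -- gradient norm
    have hgradnorm : ‖gradient (psi d lam K t) x‖ = 2*a*E0/c := by
      have hfx : fderiv ℝ (psi d lam K t) x = (gg A c r) • innerSL' d x := (hfd x hgt).fderiv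
      unfold gradient
      rw [LinearIsometryEquiv.norm_map, hfx, norm_smul, innerSL'_eq, innerSL_apply_norm]
      have hggval : gg A c r = (-(2*a/c))*E0*r⁻¹ := by
        rw [hE]; unfold gg phi'
        rw [ha]
      rw [hggval, Real.norm_eq_abs]
      have hneg : (-(2*a/c))*E0*r⁻¹ < 0 := by
        have h1 : 0 < 2*a/c * E0 * r⁻¹ := by positivity
        nlinarith
      have hrne : r ≠ 0 := ne_of_gt hr0
      rw [abs_of_neg hneg, ← hr]
      field_simp
    refine ⟨hdt.differentiableAt, hdiffx, hdiff2, ?_⟩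
    rw [hdt.deriv, hgradnorm]
    have hmul : lam * mplus (psi d lam K t) x ≤ E0 * a^2/(4*lam*(t+1)^2) := by
      have := mul_le_mul_of_nonneg_left hmp hlam.le
      calc lam * mplus (psi d lam K t) x
          ≤ lam * (E0 * a^2/(4*lam*(t+1)^2) / lam) := this
        _ = E0 * a^2/(4*lam*(t+1)^2) := by field_simp
    have hzero : E0 * ((2*K*a*(4*lam*(t+1)) + a^2*(4*lam))/(4*lam*(t+1))^2)
        - E0 * a^2/(4*lam*(t+1)^2) - K * (2*a*E0/c) = 0 := by
      rw [hc]
      field_simp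
      ring
    linarith
end

section
/- Let d ≥ 1 and 1 ≤ p < ∞. Then there exists a constant C = C(d,p) > 0 such that for every function w : ℝ^d → ℝ that is Lipschitz with constant L > 0 and satisfies ∫_{ℝ^d} |w(x)|^p dx < ∞, one has, for all x ∈ ℝ^d: |w(x)| ≤ C · L^{d/(d+p)} · ( ∫_{ℝ^d} |w(y)|^p dy )^{1/(d+p)}. -/
open MeasureTheory

/-- Interpolation inequality: `‖w‖_∞ ≤ C ‖Dw‖_∞^{d/(d+p)} ‖w‖_{L^p}^{p/(d+p)}`,
for `w` Lipschitz with constant `L` and with `∫ |w|^p < ∞`. -/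
theorem lipschitz_Lp_interpolation (d : ℕ) (hd : 1 ≤ d) (p : ℝ) (hp : 1 ≤ p) :
    ∃ C : ℝ, 0 < C ∧
      ∀ (w : EuclideanSpace ℝ (Fin d) → ℝ) (L : ℝ), 0 < L →
      (∀ x y, |w x - w y| ≤ L * ‖x - y‖) →
      Integrable (fun x : EuclideanSpace ℝ (Fin d) => |w x| ^ p) volume →
      ∀ x : EuclideanSpace ℝ (Fin d),
        |w x| ≤ C * L ^ ((d : ℝ) / ((d : ℝ) + p)) *
          (∫ y : EuclideanSpace ℝ (Fin d), |w y| ^ p) ^ ((1 : ℝ) / ((d : ℝ) + p)) := by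
  have hdp : (0:ℝ) < (d:ℝ) + p := by positivity
  set V0 : ℝ := (volume (Metric.ball (0 : EuclideanSpace ℝ (Fin d)) 1)).toReal with hV0
  have hV0pos : 0 < V0 :=
    ENNReal.toReal_pos (Metric.measure_ball_pos _ _ one_pos).ne' (measure_ball_lt_top).ne
  refine ⟨((2:ℝ) ^ ((d:ℝ) + p) / V0) ^ ((1:ℝ) / ((d:ℝ) + p)), by positivity, ?_⟩
  intro w L hL hLip hint x
  set I : ℝ := ∫ y : EuclideanSpace ℝ (Fin d), |w y| ^ p with hI
  have hInn : 0 ≤ I := integral_nonneg fun y => by positivity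
  set M : ℝ := |w x| with hM
  rcases eq_or_lt_of_le (abs_nonneg (w x)) with h0 | hMpos
  · rw [hM, ← h0]; positivity
  set r : ℝ := M / (2 * L) with hr
  have hrpos : 0 < r := by positivity
  -- lower bound on |w y| on the ball
  have hlow : ∀ y ∈ Metric.ball x r, (M / 2) ^ p ≤ |w y| ^ p := by
    intro y hy
    have hdist : ‖x - y‖ < r := by
      rw [← dist_eq_norm, dist_comm]; exact hy
    have h1 : M - |w y| ≤ L * ‖x - y‖ := (abs_sub_abs_le_abs_sub _ _).trans (hLip x y)
    have h2 : M / 2 ≤ |w y| := by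
      have : L * ‖x - y‖ ≤ L * r := by
        apply mul_le_mul_of_nonneg_left hdist.le hL.le
      have hLr : L * r = M / 2 := by rw [hr]; field_simp
      nlinarith
    exact Real.rpow_le_rpow (by positivity) h2 (by linarith)
  have hball := (measure_ball_lt_top (μ := volume) (x := x) (r := r))
  have hkey : (M / 2) ^ p * (volume (Metric.ball x r)).toReal
      ≤ ∫ y in Metric.ball x r, |w y| ^ p :=
    setIntegral_ge_of_const_le_real measurableSet_ball hball.ne hlow hint.integrableOn
  have hkey2 : ∫ y in Metric.ball x r, |w y| ^ p ≤ I :=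
    setIntegral_le_integral hint (Filter.Eventually.of_forall fun y => by positivity)
  haveI : Nonempty (Fin d) := Fin.pos_iff_nonempty.mp hd
  haveI : Nontrivial (EuclideanSpace ℝ (Fin d)) := inferInstance
  have hvol : (volume (Metric.ball x r)).toReal = r ^ ((d:ℝ)) * V0 := by
    rw [Measure.addHaar_ball _ _ hrpos.le, ENNReal.toReal_mul,
      ENNReal.toReal_ofReal (by positivity), finrank_euclideanSpace_fin, hV0,
      Real.rpow_natCast]
  have hA : (M / 2) ^ p * (r ^ ((d:ℝ)) * V0) ≤ I := by
    rw [← hvol]; exact hkey.trans hkey2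
  -- algebra: M^(d+p) * V0 ≤ 2^(d+p) * L^d * I
  have h2Lpos : (0:ℝ) < 2 * L := by positivity
  have heq : M ^ ((d:ℝ) + p) * V0
      = (M / 2) ^ p * (r ^ ((d:ℝ)) * V0) * ((2:ℝ) ^ ((d:ℝ) + p) * L ^ ((d:ℝ))) := by
    rw [hr, Real.div_rpow hMpos.le (by norm_num), Real.div_rpow hMpos.le h2Lpos.le,
      Real.mul_rpow (by norm_num) hL.le, Real.rpow_add hMpos,
      Real.rpow_add (by norm_num : (0:ℝ) < 2)]
    have h2p : (0:ℝ) < (2:ℝ) ^ p := Real.rpow_pos_of_pos two_pos p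
    have h2d : (0:ℝ) < (2:ℝ) ^ ((d:ℝ)) := Real.rpow_pos_of_pos two_pos _
    have hLd : (0:ℝ) < L ^ ((d:ℝ)) := Real.rpow_pos_of_pos hL _
    field_simp
  have hB : M ^ ((d:ℝ) + p) ≤ ((2:ℝ) ^ ((d:ℝ) + p) / V0) * L ^ ((d:ℝ)) * I := by
    rw [div_mul_eq_mul_div, div_mul_eq_mul_div, le_div_iff₀ hV0pos]
    calc M ^ ((d:ℝ) + p) * V0
        = (M / 2) ^ p * (r ^ ((d:ℝ)) * V0) * ((2:ℝ) ^ ((d:ℝ) + p) * L ^ ((d:ℝ))) := heq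
      _ ≤ I * ((2:ℝ) ^ ((d:ℝ) + p) * L ^ ((d:ℝ))) :=
          mul_le_mul_of_nonneg_right hA (by positivity)
      _ = (2:ℝ) ^ ((d:ℝ) + p) * L ^ ((d:ℝ)) * I := by ring
  -- take (1/(d+p))-th powers
  have hfin : M = (M ^ ((d:ℝ) + p)) ^ ((1:ℝ) / ((d:ℝ) + p)) := by
    rw [← Real.rpow_mul hMpos.le, mul_one_div, div_self hdp.ne', Real.rpow_one]
  rw [hfin]
  calc (M ^ ((d:ℝ) + p)) ^ ((1:ℝ) / ((d:ℝ) + p))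
      ≤ (((2:ℝ) ^ ((d:ℝ) + p) / V0) * L ^ ((d:ℝ)) * I) ^ ((1:ℝ) / ((d:ℝ) + p)) :=
        Real.rpow_le_rpow (by positivity) hB (by positivity)
    _ = ((2:ℝ) ^ ((d:ℝ) + p) / V0) ^ ((1:ℝ) / ((d:ℝ) + p)) * L ^ ((d:ℝ) / ((d:ℝ) + p))
          * I ^ ((1:ℝ) / ((d:ℝ) + p)) := by
        rw [Real.mul_rpow (by positivity) hInn, Real.mul_rpow (by positivity) (by positivity),
          ← Real.rpow_mul hL.le, mul_one_div]
end

section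
/- Let d ≥ 1, C₀ ≥ 0, λ₀ ≥ 0, and let H : ℝ^d × ℝ^d → ℝ. Fix x₀, α ∈ ℝ^d and suppose: (i) p₀ ∈ ℝ^d attains the supremum defining H*(x₀, α) := sup_{p ∈ ℝ^d} ( ⟨α, p⟩ − H(x₀, p) ), and this supremum is finite; (ii) the function p ↦ H(x₀, p) is differentiable at p₀; (iii) the function x ↦ H(x, p₀) is differentiable at x₀ with |D_x H(x₀, p₀)| ≤ C₀ + λ₀ ( ⟨p₀, D_p H(x₀, p₀)⟩ − H(x₀, p₀) ); (iv) the function x ↦ H*(x, α) := sup_{p} ( ⟨α, p⟩ − H(x, p) ) is finite in a neighborhood of x₀ and differentiable at x₀. Then |D_x H*(x₀, α)| ≤ C₀ + λ₀ · H*(x₀, α). -/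
/-- First-derivative bound transferred from a Hamiltonian `H` to its Legendre transform
`H*(x,α) = sup_p (⟨α,p⟩ - H(x,p))`: if `|D_x H(x₀,p₀)| ≤ C₀ + λ₀(p₀ · D_p H(x₀,p₀) - H(x₀,p₀))`
at a maximizer `p₀`, then `|D_x H*(x₀,α)| ≤ C₀ + λ₀ H*(x₀,α)`. -/
theorem legendre_transform_derivative_bound (d : ℕ) (hd : 1 ≤ d)
    (C0 lam0 : ℝ) (hC0 : 0 ≤ C0) (hlam0 : 0 ≤ lam0)
    (H : EuclideanSpace ℝ (Fin d) → EuclideanSpace ℝ (Fin d) → ℝ)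
    (x0 α p0 : EuclideanSpace ℝ (Fin d))
    (hmax : ∀ p : EuclideanSpace ℝ (Fin d),
      (inner ℝ α p : ℝ) - H x0 p ≤ (inner ℝ α p0 : ℝ) - H x0 p0)
    (hdiffp : DifferentiableAt ℝ (H x0) p0)
    (hdiffx : DifferentiableAt ℝ (fun x => H x p0) x0)
    (hDxH : ‖gradient (fun x => H x p0) x0‖
      ≤ C0 + lam0 * ((inner ℝ p0 (gradient (H x0) p0) : ℝ) - H x0 p0))
    (hfin : ∀ᶠ x in nhds x0,
      BddAbove (Set.range fun p : EuclideanSpace ℝ (Fin d) => (inner ℝ α p : ℝ) - H x p))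
    (hdiffstar : DifferentiableAt ℝ
      (fun x => sSup (Set.range fun p : EuclideanSpace ℝ (Fin d) => (inner ℝ α p : ℝ) - H x p))
      x0) :
    ‖gradient
        (fun x => sSup (Set.range fun p : EuclideanSpace ℝ (Fin d) => (inner ℝ α p : ℝ) - H x p))
        x0‖
      ≤ C0 + lam0 *
          sSup (Set.range fun p : EuclideanSpace ℝ (Fin d) => (inner ℝ α p : ℝ) - H x0 p) := by
  set F : EuclideanSpace ℝ (Fin d) → ℝ := fun x =>
    sSup (Set.range fun p : EuclideanSpace ℝ (Fin d) => (inner ℝ α p : ℝ) - H x p) with hFdef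
  -- value of the sup at x0
  have hF0 : F x0 = (inner ℝ α p0 : ℝ) - H x0 p0 := by
    apply IsGreatest.csSup_eq
    exact ⟨⟨p0, rfl⟩, by rintro _ ⟨p, rfl⟩; exact hmax p⟩
  -- Step 1: gradient (H x0) at p0 equals α (maximizer condition)
  have hφdiff : DifferentiableAt ℝ (fun p : EuclideanSpace ℝ (Fin d) => (inner ℝ α p : ℝ) - H x0 p) p0 :=
    ((innerSL ℝ α).differentiableAt).sub hdiffp
  have hφmax : IsLocalMax (fun p : EuclideanSpace ℝ (Fin d) => (inner ℝ α p : ℝ) - H x0 p) p0 :=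
    Filter.Eventually.of_forall hmax
  have hφf : fderiv ℝ (fun p : EuclideanSpace ℝ (Fin d) => (inner ℝ α p : ℝ) - H x0 p) p0 = 0 :=
    hφmax.fderiv_eq_zero
  have hinner_fderiv : fderiv ℝ (fun p : EuclideanSpace ℝ (Fin d) => (inner ℝ α p : ℝ)) p0 = innerSL ℝ α :=
    (innerSL ℝ α).fderiv
  have key : fderiv ℝ (fun p : EuclideanSpace ℝ (Fin d) => (inner ℝ α p : ℝ) - H x0 p) p0
      = innerSL ℝ α - fderiv ℝ (H x0) p0 :=
    HasFDerivAt.fderiv (((innerSL ℝ α).hasFDerivAt).sub hdiffp.hasFDerivAt)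
  have hfderivH : fderiv ℝ (H x0) p0 = innerSL ℝ α := by
    have h0 := hφf.symm.trans key
    have := sub_eq_zero.mp h0.symm
    exact this.symm
  have hgradH : gradient (H x0) p0 = α := by
    have hdual : InnerProductSpace.toDual ℝ (EuclideanSpace ℝ (Fin d)) α = innerSL ℝ α := by
      ext y; simp [InnerProductSpace.toDual_apply_apply]
    rw [gradient, hfderivH, ← hdual, LinearIsometryEquiv.symm_apply_apply]
  -- Step 2: gradient F x0 = - gradient (fun x => H x p0) x0
  have hgdiff : DifferentiableAt ℝ (fun x : EuclideanSpace ℝ (Fin d) => (inner ℝ α p0 : ℝ) - H x p0) x0 :=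
    (differentiableAt_const _).sub hdiffx
  have hlocmin : IsLocalMin (fun x : EuclideanSpace ℝ (Fin d) => F x - ((inner ℝ α p0 : ℝ) - H x p0)) x0 := by
    filter_upwards [hfin] with x hbdd
    have h1 : (inner ℝ α p0 : ℝ) - H x p0 ≤ F x := le_csSup hbdd ⟨p0, rfl⟩
    simp only [hF0]
    linarith
  have hdsub : fderiv ℝ (fun x : EuclideanSpace ℝ (Fin d) => F x - ((inner ℝ α p0 : ℝ) - H x p0)) x0 = 0 :=
    hlocmin.fderiv_eq_zero
  have hFeq : fderiv ℝ F x0 = fderiv ℝ (fun x : EuclideanSpace ℝ (Fin d) => (inner ℝ α p0 : ℝ) - H x p0) x0 := by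
    have := fderiv_fun_sub hdiffstar hgdiff
    rw [hdsub] at this
    have := this.symm
    rwa [sub_eq_zero] at this
  have hgfderiv : fderiv ℝ (fun x : EuclideanSpace ℝ (Fin d) => (inner ℝ α p0 : ℝ) - H x p0) x0
      = -(fderiv ℝ (fun x => H x p0) x0) :=
    HasFDerivAt.fderiv (hdiffx.hasFDerivAt.const_sub _)
  have hnorm : ‖gradient F x0‖ = ‖gradient (fun x => H x p0) x0‖ := by
    rw [gradient, gradient, hFeq, hgfderiv]
    rw [LinearIsometryEquiv.norm_map, LinearIsometryEquiv.norm_map, norm_neg]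
  -- Conclude
  have hp0a : (inner ℝ p0 (gradient (H x0) p0) : ℝ) = (inner ℝ α p0 : ℝ) := by
    rw [hgradH, real_inner_comm]
  calc ‖gradient F x0‖ = ‖gradient (fun x => H x p0) x0‖ := hnorm
    _ ≤ C0 + lam0 * ((inner ℝ p0 (gradient (H x0) p0) : ℝ) - H x0 p0) := hDxH
    _ = C0 + lam0 * F x0 := by rw [hp0a, hF0]
end
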